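/- Let R be an associative ring and λ be an infinite cardinal with λ ≥ |R|. Let S be the class of flat left R-modules of cardinality at most λ. Then a left R-module is flat if and only if it admits an ordinal-indexed filtration whose successive quotients are isomorphic to modules from S. In particular, the class of flat left R-modules is deconstructible. -/

import Mathlib

/-!
Common definitions: flatness over a possibly noncommutative ring (via the standard
equational criterion, which is equivalent to exactness of `- ⊗_R M`), vanishing of
`Ext¹`, and cotorsion modules.
-/

universe u
noncomputable section
open CategoryTheory

/-- Flatness of a left module over a possibly noncommutative ring, expressed via the
standard equational criterion (equivalent to exactness of the functor `- ⊗_R M`). -/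
def IsFlatModule (R : Type u) [Ring R] (M : Type u) [AddCommGroup M] [Module R M] : Prop :=
  ∀ (n : ℕ) (r : Fin n → R) (x : Fin n → M), (∑ i, r i • x i) = 0 →
    ∃ (m : ℕ) (b : Fin n → Fin m → R) (y : Fin m → M),
      (∀ i, x i = ∑ j, b i j • y j) ∧ (∀ j, (∑ i, r i * b i j) = 0)

/-- `Ext¹_R(F, C) = 0`, where `Ext` is the derived functor of `Hom` on the abelian
category of left `R`-modules. -/
def Ext1Vanishes (R : Type u) [Ring R] (F : Type u) [AddCommGroup F] [Module R F]
    (C : Type u) [AddCommGroup C] [Module R C] : Prop :=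
  Subsingleton (((Ext ℤ (ModuleCat.{u} R) 1).obj
    (Opposite.op (ModuleCat.of R F))).obj (ModuleCat.of R C))

/-- A left `R`-module `C` is cotorsion if `Ext¹_R(F, C) = 0` for every flat left
`R`-module `F`. -/
def IsCotorsion (R : Type u) [Ring R] (C : Type u) [AddCommGroup C] [Module R C] : Prop :=
  ∀ (F : Type u) [AddCommGroup F] [Module R F], IsFlatModule R F → Ext1Vanishes R F C

/-- An ordinal-indexed filtration of a module `M`: a family `F` of submodules indexed by
the ordinals `≤ α` (the values at ordinals `> α` are irrelevant) with `F 0 = ⊥`,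
`F α = ⊤`, `F` monotone, and continuity at limit ordinals. -/
structure IsOrdinalFiltration (R : Type u) [Ring R] {M : Type u} [AddCommGroup M] [Module R M]
    (α : Ordinal.{u}) (F : Ordinal.{u} → Submodule R M) : Prop where
  zero : F 0 = ⊥
  top : F α = ⊤
  mono : ∀ ⦃i j : Ordinal.{u}⦄, i ≤ j → j ≤ α → F i ≤ F j
  limit : ∀ ⦃j : Ordinal.{u}⦄, j ≤ α → Order.IsSuccLimit j → F j = ⨆ i < j, F i

/-- The successive quotient `F (i+1) / F i` of a filtration. -/
abbrev succQuot (R : Type u) [Ring R] {M : Type u} [AddCommGroup M] [Module R M]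
    (F : Ordinal.{u} → Submodule R M) (i : Ordinal.{u}) : Type u :=
  ↥(F (i + 1)) ⧸ (Submodule.comap (F (i + 1)).subtype (F i))

/-- `M` is filtered by (modules isomorphic to) modules from the class `S`: it admits an
ordinal-indexed filtration whose successive quotients are isomorphic to members of `S`. -/
def IsFilteredBy (R : Type u) [Ring R] (S : Set (ModuleCat.{u} R))
    (M : Type u) [AddCommGroup M] [Module R M] : Prop :=
  ∃ (α : Ordinal.{u}) (F : Ordinal.{u} → Submodule R M), IsOrdinalFiltration R α F ∧
    ∀ i < α, ∃ N ∈ S, Nonempty ((succQuot R F i) ≃ₗ[R] N)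

/-!
Flatness is used in its equational form. Call a submodule `P` of `M` flat-pure if every relation
among elements of `P` is trivial inside `P` and `P ∩ I M = I P` for every finitely generated right
ideal `I`. If `M` is flat, so is `M ⧸ P`; flat-purity passes to directed unions and to preimages
of flat-pure submodules of `M ⧸ P`. Closing a subset of size `≤ λ` countably often under
witnesses for relations and solutions of equations shows that every element of a flat module lies
in a flat-pure submodule of size `≤ λ`. Enumerating `M` by an ordinal and at each step adding the
preimage of such a submodule of the current quotient filters `M` by flat-pure submodules whose
successive quotients are flat of size `≤ λ`. Conversely, equational flatness survives extensions
and directed unions, so any module filtered by flat modules is flat.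
-/

universe v

open Cardinal Submodule

section Relations

variable {R : Type u} [Ring R] {M : Type u} [AddCommGroup M] [Module R M]

def TrivializesRelations (N N' : Submodule R M) : Prop :=
  ∀ (n : ℕ) (r : Fin n → R) (x : Fin n → M), (∀ i, x i ∈ N) → ∑ i, r i • x i = 0 →
    ∃ (m : ℕ) (b : Fin n → Fin m → R) (y : Fin m → M), (∀ j, y j ∈ N') ∧
      (∀ i, x i = ∑ j, b i j • y j) ∧ ∀ j, ∑ i, r i * b i j = 0

def SolvesEquations (N N' : Submodule R M) : Prop :=
  ∀ (n : ℕ) (r : Fin n → R) (p : M), p ∈ N → (∃ m : Fin n → M, ∑ i, r i • m i = p) →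
    ∃ q : Fin n → M, (∀ i, q i ∈ N') ∧ ∑ i, r i • q i = p

def IsFlatPure (P : Submodule R M) : Prop :=
  TrivializesRelations P P ∧ SolvesEquations P P

theorem isFlatModule_iff_trivializesRelations_top :
    IsFlatModule R M ↔ TrivializesRelations (⊤ : Submodule R M) ⊤ := by
  refine ⟨fun h n r x _ hx => ?_, fun h n r x hx => ?_⟩
  · obtain ⟨m, b, y, hxy, hrb⟩ := h n r x hx
    exact ⟨m, b, y, fun _ => trivial, hxy, hrb⟩
  · obtain ⟨m, b, y, -, hxy, hrb⟩ := h n r x (fun _ => trivial) hx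
    exact ⟨m, b, y, hxy, hrb⟩

theorem trivializesRelations_self_iff (P : Submodule R M) :
    TrivializesRelations P P ↔ IsFlatModule R P := by
  refine ⟨fun h n r x hx => ?_, fun h n r x hxP hx => ?_⟩
  · obtain ⟨m, b, y, hyP, hxy, hrb⟩ :=
      h n r (fun i => x i) (fun i => (x i).2) (by simpa using congrArg P.subtype hx)
    exact ⟨m, b, fun j => ⟨y j, hyP j⟩, fun i => Subtype.ext (by simpa using hxy i), hrb⟩
  · obtain ⟨m, b, y, hxy, hrb⟩ := h n r (fun i => ⟨x i, hxP i⟩) (Subtype.ext (by simpa using hx))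
    exact ⟨m, b, fun j => y j, fun j => (y j).2,
      fun i => by simpa using congrArg P.subtype (hxy i), hrb⟩

theorem IsFlatModule.of_linearEquiv {N : Type u} [AddCommGroup N] [Module R N] (e : M ≃ₗ[R] N)
    (h : IsFlatModule R M) : IsFlatModule R N := by
  intro n r x hx
  obtain ⟨m, b, y, hxy, hrb⟩ :=
    h n r (fun i => e.symm (x i)) (by simpa using congrArg e.symm hx)
  exact ⟨m, b, fun j => e (y j), fun i => by simpa using congrArg e (hxy i), hrb⟩

theorem isFlatPure_bot : IsFlatPure (⊥ : Submodule R M) := by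
  refine ⟨fun n r x hx _ => ⟨0, fun _ => Fin.elim0, Fin.elim0, fun j => j.elim0, fun i => ?_,
    fun j => j.elim0⟩, fun n r p hp _ => ⟨0, fun _ => zero_mem _, ?_⟩⟩
  · simpa using hx i
  · simpa using ((mem_bot R).1 hp).symm

variable {ι : Type*} [Nonempty ι] {N N' : ι → Submodule R M}

theorem TrivializesRelations.iSup_of_directed (hN : Directed (· ≤ ·) N)
    (h : ∀ i, TrivializesRelations (N i) (N' i)) :
    TrivializesRelations (⨆ i, N i) (⨆ i, N' i) := by
  intro n r x hx hrel
  choose k hk using fun i => (mem_iSup_of_directed N hN).1 (hx i)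
  obtain ⟨z, hz⟩ := hN.finite_le k
  obtain ⟨m, b, y, hy, hxy, hrb⟩ := h z n r x (fun i => hz i (hk i)) hrel
  exact ⟨m, b, y, fun j => le_iSup N' z (hy j), hxy, hrb⟩

theorem SolvesEquations.iSup_of_directed (hN : Directed (· ≤ ·) N)
    (h : ∀ i, SolvesEquations (N i) (N' i)) : SolvesEquations (⨆ i, N i) (⨆ i, N' i) := by
  intro n r p hp hsol
  obtain ⟨z, hz⟩ := (mem_iSup_of_directed N hN).1 hp
  obtain ⟨q, hq, hrq⟩ := h z n r p hz hsol
  exact ⟨q, fun i => le_iSup N' z (hq i), hrq⟩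

theorem IsFlatPure.iSup_of_directed (hN : Directed (· ≤ ·) N) (h : ∀ i, IsFlatPure (N i)) :
    IsFlatPure (⨆ i, N i) :=
  ⟨.iSup_of_directed hN fun i => (h i).1, .iSup_of_directed hN fun i => (h i).2⟩

end Relations

section Extensions

variable {R : Type u} [Ring R] {M : Type u} [AddCommGroup M] [Module R M]

theorem sum_smul_sum_smul {n m : ℕ} (r : Fin n → R) (b : Fin n → Fin m → R) (y : Fin m → M) :
    ∑ i, r i • ∑ j, b i j • y j = ∑ j, (∑ i, r i * b i j) • y j := by
  simp only [Finset.smul_sum, smul_smul, Finset.sum_smul]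
  exact Finset.sum_comm

theorem mkQ_sum_smul (P : Submodule R M) {n : ℕ} (r : Fin n → R) (x : Fin n → M) :
    P.mkQ (∑ i, r i • x i) = ∑ i, r i • P.mkQ (x i) := by
  simp only [map_sum, map_smul]

/-- A relation in `M ⧸ P` lifts to `M` up to an error in `P`; solving the resulting equation
inside `P` corrects the lift to a relation in `M`, which is trivial because `M` is flat. -/
theorem IsFlatModule.quotient (hM : IsFlatModule R M) {P : Submodule R M}
    (hP : SolvesEquations P P) : IsFlatModule R (M ⧸ P) := by
  intro n r x hx
  choose m hm using fun i => P.mkQ_surjective (x i)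
  have hmP : ∑ i, r i • m i ∈ P := by
    rw [← P.ker_mkQ, LinearMap.mem_ker, mkQ_sum_smul]
    simpa only [hm] using hx
  obtain ⟨q, hqP, hrq⟩ := hP n r _ hmP ⟨m, rfl⟩
  obtain ⟨k, b, y, hxy, hrb⟩ := hM n r (m - q) (by simp [smul_sub, hrq])
  refine ⟨k, b, fun j => P.mkQ (y j), fun i => ?_, hrb⟩
  calc x i = P.mkQ (m i - q i) := by
        rw [map_sub, (P.mkQ_apply (q i)).trans ((Quotient.mk_eq_zero P).2 (hqP i)), sub_zero,
          hm]
    _ = ∑ j, b i j • P.mkQ (y j) := by rw [← Pi.sub_apply, hxy i, mkQ_sum_smul]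

/-- Extensions of flat modules are flat: a relation in `P'` becomes trivial in `P' ⧸ P` up to
error terms, which form a relation in `P`. -/
theorem TrivializesRelations.of_quotient {P P' : Submodule R M} (hle : P ≤ P')
    (hP : TrivializesRelations P P) (hq : IsFlatModule R (P' ⧸ P.comap P'.subtype)) :
    TrivializesRelations P' P' := by
  intro n r x hx hrel
  set K := P.comap P'.subtype
  obtain ⟨m, b, η, hxη, hrb⟩ := hq n r (fun i => K.mkQ ⟨x i, hx i⟩) <| by
    rw [← mkQ_sum_smul, ← map_zero K.mkQ]
    exact congrArg K.mkQ (Subtype.ext (by simpa using hrel))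
  choose Y hY using fun j => K.mkQ_surjective (η j)
  set d : Fin n → M := fun i => x i - ∑ j, b i j • (Y j : M)
  have hdP : ∀ i, d i ∈ P := fun i => by
    have : K.mkQ (⟨x i, hx i⟩ - ∑ j, b i j • Y j) = 0 := by
      rw [map_sub, mkQ_sum_smul, hxη i]
      simp only [hY, sub_self]
    simpa [K, d] using (Quotient.mk_eq_zero K).1 this
  have hdrel : ∑ i, r i • d i = 0 := by
    simp only [d, smul_sub, Finset.sum_sub_distrib, hrel, sum_smul_sum_smul, hrb, zero_smul,
      Finset.sum_const_zero, sub_zero]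
  obtain ⟨m', c, z, hzP, hdz, hrc⟩ := hP n r d hdP hdrel
  refine ⟨m + m', fun i => Fin.append (b i) (c i), Fin.append (fun j => (Y j : M)) z,
    fun j => ?_, fun i => ?_, fun j => ?_⟩
  · refine Fin.addCases (fun j => ?_) (fun j => ?_) j
    · simp
    · simpa using hle (hzP j)
  · rw [Fin.sum_univ_add]
    simpa [d, sub_eq_iff_eq_add'] using hdz i
  · refine Fin.addCases (fun j => ?_) (fun j => ?_) j
    · simpa using hrb j
    · simpa using hrc j

end Extensions

section Preimages

variable {R : Type u} [Ring R] {M : Type u} [AddCommGroup M] [Module R M]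

theorem SolvesEquations.comap_mkQ {P : Submodule R M} (hP : SolvesEquations P P)
    {Q : Submodule R (M ⧸ P)} (hQ : SolvesEquations Q Q) :
    SolvesEquations (Q.comap P.mkQ) (Q.comap P.mkQ) := by
  rintro n r p hp ⟨m, rfl⟩
  obtain ⟨q, hqQ, hrq⟩ := hQ n r _ hp ⟨fun i => P.mkQ (m i), (mkQ_sum_smul P r m).symm⟩
  choose u hu using fun i => P.mkQ_surjective (q i)
  have huQ : ∀ i, u i ∈ Q.comap P.mkQ := fun i => by simpa [mem_comap, hu i] using hqQ i
  have hdiff : ∑ i, r i • m i - ∑ i, r i • u i ∈ P := by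
    rw [← P.ker_mkQ, LinearMap.mem_ker, map_sub, mkQ_sum_smul P r u]
    simp only [hu, hrq, sub_self]
  obtain ⟨v, hvP, hrv⟩ := hP n r _ hdiff ⟨m - u, by simp [smul_sub]⟩
  refine ⟨u + v, fun i => add_mem (huQ i) (le_comap_mkQ P Q (hvP i)), ?_⟩
  simp only [Pi.add_apply, smul_add, Finset.sum_add_distrib, hrv, add_sub_cancel]

def comapMkQQuotientEquiv (P : Submodule R M) (Q : Submodule R (M ⧸ P)) :
    (Q.comap P.mkQ ⧸ P.comap (Q.comap P.mkQ).subtype) ≃ₗ[R] Q :=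
  let f := P.mkQ.restrict (p := Q.comap P.mkQ) (q := Q) fun _ hx => hx
  (quotEquivOfEq _ _ (by rw [LinearMap.ker_restrict, ker_mkQ])).trans
    (f.quotKerEquivOfSurjective fun ⟨y, hy⟩ => by
      obtain ⟨x, rfl⟩ := P.mkQ_surjective y
      exact ⟨⟨x, hy⟩, rfl⟩)

theorem IsFlatPure.comap_mkQ {P : Submodule R M} (hP : IsFlatPure P)
    {Q : Submodule R (M ⧸ P)} (hQ : IsFlatPure Q) : IsFlatPure (Q.comap P.mkQ) :=
  ⟨hP.1.of_quotient (le_comap_mkQ P Q) <|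
      ((trivializesRelations_self_iff Q).1 hQ.1).of_linearEquiv (comapMkQQuotientEquiv P Q).symm,
    hP.2.comap_mkQ hQ.2⟩

end Preimages

namespace Cardinal

variable {lam : Cardinal.{u}}

theorem sum_le_of_le (hinf : ℵ₀ ≤ lam) {ι : Type v} (hι : lift.{u} #ι ≤ lift.{v} lam)
    {f : ι → Cardinal.{u}} (hf : ∀ i, f i ≤ lam) : sum f ≤ lift.{v} lam :=
  calc sum f ≤ sum fun _ : ι => lam := sum_le_sum _ _ hf
    _ = lift.{u} #ι * lift.{v} lam := sum_const ι lam
    _ ≤ lift.{v} lam * lift.{v} lam := mul_le_mul' hι le_rfl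
    _ = lift.{v} lam := mul_eq_self (aleph0_le_lift.2 hinf)

theorem mk_sigma_le_of_le (hinf : ℵ₀ ≤ lam) {ι : Type v} (hι : lift.{u} #ι ≤ lift.{v} lam)
    {β : ι → Type u} (hβ : ∀ i, #(β i) ≤ lam) : #(Σ i, β i) ≤ lift.{v} lam :=
  (mk_sigma β).trans_le (sum_le_of_le hinf hι hβ)

theorem mk_iUnion_le_of_le (hinf : ℵ₀ ≤ lam) {α : Type u} {ι : Type v}
    (hι : lift.{u} #ι ≤ lift.{v} lam) {f : ι → Set α} (hf : ∀ i, #(f i) ≤ lam) :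
    #(⋃ i, f i) ≤ lam :=
  lift_le.1 (mk_iUnion_le_sum_mk_lift.trans (sum_le_of_le hinf hι hf))

theorem mk_fin_arrow_le (hinf : ℵ₀ ≤ lam) {A : Type u} (hA : #A ≤ lam) (n : ℕ) :
    #(Fin n → A) ≤ lam := by
  simpa using (power_le_power_right hA).trans (power_nat_le (n := n) hinf)

theorem mk_prod_le (hinf : ℵ₀ ≤ lam) {A B : Type u} (hA : #A ≤ lam) (hB : #B ≤ lam) :
    #(A × B) ≤ lam := by
  rw [mk_prod, lift_id, lift_id]
  exact (mul_le_mul' hA hB).trans (mul_eq_self hinf).le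

theorem mk_sigma_fin_arrow_le (hinf : ℵ₀ ≤ lam) {A : Type u} (hA : #A ≤ lam) :
    #(Σ n : ℕ, Fin n → A) ≤ lam := by
  simpa using mk_sigma_le_of_le (β := fun n : ℕ => Fin n → A) hinf (by simpa using hinf)
    (mk_fin_arrow_le hinf hA)

theorem mk_span_le {R M : Type u} [Ring R] [AddCommGroup M] [Module R M] (hinf : ℵ₀ ≤ lam)
    (hR : #R ≤ lam) {S : Set M} (hS : #S ≤ lam) : #(span R S) ≤ lam := by
  refine (mk_le_of_surjective (f := fun t : Σ n : ℕ, Fin n → R × S =>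
    (⟨∑ i, (t.2 i).1 • ((t.2 i).2 : M), mem_span_set'.2 ⟨_, _, _, rfl⟩⟩ : span R S)) ?_).trans
    (mk_sigma_fin_arrow_le hinf (mk_prod_le hinf hR hS))
  rintro ⟨x, hx⟩
  obtain ⟨n, r, s, rfl⟩ := mem_span_set'.1 hx
  exact ⟨⟨n, fun i => (r i, s i)⟩, rfl⟩

end Cardinal

section Closure

variable {R : Type u} [Ring R] {M : Type u} [AddCommGroup M] [Module R M] {lam : Cardinal.{u}}

theorem exists_trivializesRelations_solvesEquations (hM : IsFlatModule R M) (hinf : ℵ₀ ≤ lam)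
    (hR : #R ≤ lam) (N : Submodule R M) :
    ∃ N', N ≤ N' ∧ TrivializesRelations N N' ∧ SolvesEquations N N' ∧
      (#N ≤ lam → #N' ≤ lam) := by
  have hrel : ∀ t : Σ n : ℕ, Fin n → R × N, ∃ (m : ℕ) (b : Fin t.1 → Fin m → R)
      (y : Fin m → M), ∑ i, (t.2 i).1 • ((t.2 i).2 : M) = 0 →
        (∀ i, ((t.2 i).2 : M) = ∑ j, b i j • y j) ∧ ∀ j, ∑ i, (t.2 i).1 * b i j = 0 := by
    rintro ⟨n, t⟩
    by_cases h : ∑ i, (t i).1 • ((t i).2 : M) = 0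
    · obtain ⟨m, b, y, hxy, hrb⟩ := hM n _ _ h
      exact ⟨m, b, y, fun _ => ⟨hxy, hrb⟩⟩
    · exact ⟨0, 0, 0, fun h' => (h h').elim⟩
  have heqn : ∀ t : (Σ n : ℕ, Fin n → R) × N, ∃ q : Fin t.1.1 → M,
      (∃ m : Fin t.1.1 → M, ∑ i, t.1.2 i • m i = t.2) → ∑ i, t.1.2 i • q i = t.2 := fun t => by
    by_cases h : ∃ m : Fin t.1.1 → M, ∑ i, t.1.2 i • m i = t.2
    · exact ⟨h.choose, fun _ => h.choose_spec⟩
    · exact ⟨0, fun h' => (h h').elim⟩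
  choose m b y hy using hrel
  choose q hq using heqn
  refine ⟨span R (N ∪ (⋃ t, Set.range (y t)) ∪ ⋃ t, Set.range (q t)), fun x hx => subset_span
      (.inl (.inl hx)), fun n r x hx hrx => ?_, fun n r p hp hsol => ?_, fun hN => ?_⟩
  · obtain ⟨hxy, hrb⟩ := hy ⟨n, fun i => (r i, ⟨x i, hx i⟩)⟩ hrx
    exact ⟨_, _, _, fun j => subset_span (.inl (.inr (Set.mem_iUnion_of_mem _ ⟨j, rfl⟩))),
      hxy, hrb⟩
  · exact ⟨_, fun i => subset_span (.inr (Set.mem_iUnion_of_mem (⟨n, r⟩, ⟨p, hp⟩) ⟨i, rfl⟩)),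
      hq (⟨n, r⟩, ⟨p, hp⟩) hsol⟩
  · have hfin : ∀ k (z : Fin k → M), #(Set.range z) ≤ lam := fun k z =>
      (Set.finite_range z).lt_aleph0.le.trans hinf
    refine mk_span_le hinf hR <| (mk_union_le _ _).trans <| add_le_of_le hinf
      ((mk_union_le _ _).trans (add_le_of_le hinf hN ?_)) ?_
    · exact mk_iUnion_le_of_le hinf
        (lift_le.2 (mk_sigma_fin_arrow_le hinf (mk_prod_le hinf hR hN))) fun _ => hfin _ _
    · exact mk_iUnion_le_of_le hinf
        (lift_le.2 (mk_prod_le hinf (mk_sigma_fin_arrow_le hinf hR) hN)) fun _ => hfin _ _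

theorem exists_isFlatPure_subset_mk_le (hM : IsFlatModule R M) (hinf : ℵ₀ ≤ lam)
    (hR : #R ≤ lam) {X : Set M} (hX : #X ≤ lam) :
    ∃ P : Submodule R M, IsFlatPure P ∧ X ⊆ P ∧ #P ≤ lam := by
  choose step hle htriv hsolve hcard using exists_trivializesRelations_solvesEquations hM hinf hR
  set C : ℕ → Submodule R M := fun k => step^[k] (span R X)
  have hCsucc : ∀ k, C (k + 1) = step (C k) := fun k => Function.iterate_succ_apply' ..
  have hC : Monotone C := monotone_nat_of_le_succ fun k => hCsucc k ▸ hle (C k)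
  have hCsmall : ∀ k, #(C k) ≤ lam := fun k => by
    induction k with
    | zero => exact mk_span_le hinf hR hX
    | succ k ih => exact hCsucc k ▸ hcard _ ih
  have hsup : ⨆ k, C (k + 1) = ⨆ k, C k := hC.iSup_nat_add 1
  refine ⟨⨆ k, C k, ⟨?_, ?_⟩, subset_span.trans (le_iSup C 0), ?_⟩
  · simpa only [hsup] using TrivializesRelations.iSup_of_directed (N' := fun k => C (k + 1))
      hC.directed_le fun k => hCsucc k ▸ htriv (C k)
  · simpa only [hsup] using SolvesEquations.iSup_of_directed (N' := fun k => C (k + 1))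
      hC.directed_le fun k => hCsucc k ▸ hsolve (C k)
  · change #((⨆ k, C k : Submodule R M) : Set M) ≤ lam
    rw [coe_iSup_of_directed C hC.directed_le]
    exact mk_iUnion_le_of_le hinf (by simpa using hinf) hCsmall

end Closure

section Filtrations

variable {R : Type u} [Ring R] {M : Type u} [AddCommGroup M] [Module R M]

theorem IsFlatModule.of_isOrdinalFiltration {α : Ordinal.{u}}
    {F : Ordinal.{u} → Submodule R M} (hF : IsOrdinalFiltration R α F)
    (hq : ∀ i < α, IsFlatModule R (succQuot R F i)) : IsFlatModule R M := by
  suffices h : ∀ i ≤ α, TrivializesRelations (F i) (F i) by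
    simpa [isFlatModule_iff_trivializesRelations_top, hF.top] using h α le_rfl
  intro i
  induction i using Ordinal.limitRecOn with
  | zero => exact fun _ => hF.zero ▸ isFlatPure_bot.1
  | add_one j ih =>
    intro hj
    have hjα : j < α := (Order.lt_add_one_iff.2 le_rfl).trans_le hj
    exact (ih hjα.le).of_quotient (hF.mono (le_add_right le_rfl) hj) (hq j hjα)
  | limit j hj ih =>
    intro hjα
    have : Nonempty {k // k < j} := ⟨⟨0, hj.bot_lt⟩⟩
    rw [hF.limit hjα hj, iSup_subtype']
    exact .iSup_of_directed (Monotone.directed_le fun _ b hab => hF.mono hab (b.2.le.trans hjα))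
      fun k => ih k.1 k.2 (k.2.le.trans hjα)

theorem IsFlatModule.of_isFilteredBy {S : Set (ModuleCat.{u} R)}
    (hS : ∀ N ∈ S, IsFlatModule R N) (hM : IsFilteredBy R S M) : IsFlatModule R M := by
  obtain ⟨α, F, hF, hq⟩ := hM
  refine .of_isOrdinalFiltration hF fun i hi => ?_
  obtain ⟨N, hN, ⟨e⟩⟩ := hq i hi
  exact (hS N hN).of_linearEquiv e.symm

end Filtrations

section Construction

variable {R : Type u} [Ring R] {M : Type u} [AddCommGroup M] [Module R M] (lam : Cardinal.{u})

theorem exists_ordinal_enumeration (X : Type u) [Nonempty X] :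
    ∃ (α : Ordinal.{u}) (g : Ordinal.{u} → X), ∀ x, ∃ i < α, g i = x :=
  ⟨_, Function.invFun (Ordinal.typein WellOrderingRel), fun x =>
    ⟨_, Ordinal.typein_lt_type _ x,
      Function.leftInverse_invFun (Ordinal.typein_injective WellOrderingRel) x⟩⟩

open scoped Classical in
/-- The junk value `⊤` never occurs along the filtration of a flat module. -/
def filtStep (P : Submodule R M) (x : M) : Submodule R M :=
  if h : ∃ Q : Submodule R (M ⧸ P), IsFlatPure Q ∧ P.mkQ x ∈ Q ∧ #Q ≤ lam then
    h.choose.comap P.mkQ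
  else ⊤

variable (R) in
def flatFiltration (g : Ordinal.{u} → M) (i : Ordinal.{u}) : Submodule R M :=
  Ordinal.limitRecOn i ⊥ (fun j P => filtStep lam P (g j))
    fun j _ F => ⨆ k, ⨆ hk : k < j, F k hk

variable {lam} (g : Ordinal.{u} → M)

theorem flatFiltration_zero : flatFiltration R lam g 0 = ⊥ :=
  Ordinal.limitRecOn_zero ..

theorem flatFiltration_add_one (i : Ordinal.{u}) :
    flatFiltration R lam g (i + 1) = filtStep lam (flatFiltration R lam g i) (g i) :=
  Ordinal.limitRecOn_add_one ..

theorem flatFiltration_limit {j : Ordinal.{u}} (hj : Order.IsSuccLimit j) :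
    flatFiltration R lam g j = ⨆ i, ⨆ _ : i < j, flatFiltration R lam g i :=
  Ordinal.limitRecOn_limit _ _ _ _ hj

theorem le_filtStep (P : Submodule R M) (x : M) : P ≤ filtStep lam P x := by
  unfold filtStep
  split_ifs
  exacts [le_comap_mkQ P _, le_top]

theorem filtStep_eq_comap (hinf : ℵ₀ ≤ lam) (hR : #R ≤ lam) {P : Submodule R M}
    (hP : IsFlatModule R (M ⧸ P)) (x : M) :
    ∃ Q : Submodule R (M ⧸ P), IsFlatPure Q ∧ P.mkQ x ∈ Q ∧ #Q ≤ lam ∧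
      filtStep lam P x = Q.comap P.mkQ := by
  have h : ∃ Q : Submodule R (M ⧸ P), IsFlatPure Q ∧ P.mkQ x ∈ Q ∧ #Q ≤ lam := by
    obtain ⟨Q, hQ, hxQ, hQlam⟩ := exists_isFlatPure_subset_mk_le hP hinf hR
      (X := {P.mkQ x}) ((mk_singleton _).trans_le (one_le_aleph0.trans hinf))
    exact ⟨Q, hQ, hxQ rfl, hQlam⟩
  rw [filtStep, dif_pos h]
  exact ⟨h.choose, h.choose_spec.1, h.choose_spec.2.1, h.choose_spec.2.2, rfl⟩

theorem flatFiltration_mono : Monotone (flatFiltration R lam g) := by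
  intro i j hij
  induction j using Ordinal.limitRecOn generalizing i with
  | zero => rw [nonpos_iff_eq_zero.1 hij]
  | add_one j ih =>
    rcases hij.lt_or_eq with hij | rfl
    · rw [flatFiltration_add_one]
      exact (ih (Order.lt_add_one_iff.1 hij)).trans (le_filtStep _ _)
    · rfl
  | limit j hj ih =>
    rcases hij.lt_or_eq with hij | rfl
    · rw [flatFiltration_limit g hj]
      exact le_biSup (flatFiltration R lam g) hij
    · rfl

theorem isFlatPure_flatFiltration (hM : IsFlatModule R M) (hinf : ℵ₀ ≤ lam) (hR : #R ≤ lam)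
    (i : Ordinal.{u}) : IsFlatPure (flatFiltration R lam g i) := by
  induction i using Ordinal.limitRecOn with
  | zero =>
    rw [flatFiltration_zero]
    exact isFlatPure_bot
  | add_one j ih =>
    obtain ⟨Q, hQ, -, -, heq⟩ := filtStep_eq_comap hinf hR (hM.quotient ih.2) (g j)
    rw [flatFiltration_add_one, heq]
    exact ih.comap_mkQ hQ
  | limit j hj ih =>
    have : Nonempty {k // k < j} := ⟨⟨0, hj.bot_lt⟩⟩
    rw [flatFiltration_limit g hj, iSup_subtype']
    exact .iSup_of_directed ((flatFiltration_mono g).comp (Subtype.mono_coe _)).directed_le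
      fun k => ih k.1 k.2

theorem exists_flatFiltration_add_one_eq_comap (hM : IsFlatModule R M) (hinf : ℵ₀ ≤ lam)
    (hR : #R ≤ lam) (i : Ordinal.{u}) :
    ∃ Q : Submodule R (M ⧸ flatFiltration R lam g i), IsFlatPure Q ∧ #Q ≤ lam ∧
      g i ∈ flatFiltration R lam g (i + 1) ∧
      flatFiltration R lam g (i + 1) = Q.comap (flatFiltration R lam g i).mkQ := by
  obtain ⟨Q, hQ, hgQ, hQlam, heq⟩ := filtStep_eq_comap hinf hR
    (hM.quotient (isFlatPure_flatFiltration g hM hinf hR i).2) (g i)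
  rw [flatFiltration_add_one, heq]
  exact ⟨Q, hQ, hQlam, hgQ, rfl⟩

theorem IsFlatModule.isFilteredBy (hM : IsFlatModule R M) (hinf : ℵ₀ ≤ lam)
    (hR : #R ≤ lam) : IsFilteredBy R {N : ModuleCat.{u} R | IsFlatModule R N ∧ #N ≤ lam} M := by
  obtain ⟨α, g, hg⟩ := exists_ordinal_enumeration M
  refine ⟨α, flatFiltration R lam g, ⟨flatFiltration_zero g, eq_top_iff.2 fun m _ => ?_,
    fun i j hij _ => flatFiltration_mono g hij, fun j _ hj => flatFiltration_limit g hj⟩,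
    fun i _ => ?_⟩
  · obtain ⟨i, hi, rfl⟩ := hg m
    obtain ⟨-, -, -, hgi, -⟩ := exists_flatFiltration_add_one_eq_comap g hM hinf hR i
    exact flatFiltration_mono g (Order.add_one_le_of_lt hi) hgi
  · obtain ⟨Q, hQ, hQlam, -, heq⟩ := exists_flatFiltration_add_one_eq_comap g hM hinf hR i
    refine ⟨ModuleCat.of R Q, ⟨(trivializesRelations_self_iff Q).1 hQ.1, hQlam⟩, ?_⟩
    dsimp only [succQuot]
    rw [heq]
    exact ⟨comapMkQQuotientEquiv _ Q⟩

end Construction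

/-- Enochs; Bican–El Bashir–Enochs. Let `R` be an associative ring and
`λ` an infinite cardinal with `λ ≥ |R|`. Let `S` be the class of flat left `R`-modules of
cardinality at most `λ`. Then a left `R`-module is flat if and only if it is filtered by
modules from `S`; in particular, the class of flat left `R`-modules is deconstructible. -/
theorem flat_modules_deconstructible (R : Type u) [Ring R] (lam : Cardinal.{u})
    (hinf : Cardinal.aleph0 ≤ lam) (hR : Cardinal.mk R ≤ lam) :
    (∀ (M : Type u) [AddCommGroup M] [Module R M],
      IsFlatModule R M ↔
        IsFilteredBy R {N : ModuleCat.{u} R | IsFlatModule R ↥N ∧ Cardinal.mk ↥N ≤ lam} M) ∧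
    (∃ S : Set (ModuleCat.{u} R), ∀ (M : Type u) [AddCommGroup M] [Module R M],
      IsFlatModule R M ↔ IsFilteredBy R S M) := by
  have key : ∀ (M : Type u) [AddCommGroup M] [Module R M], IsFlatModule R M ↔
      IsFilteredBy R {N : ModuleCat.{u} R | IsFlatModule R ↥N ∧ Cardinal.mk ↥N ≤ lam} M :=
    fun _ _ _ => ⟨fun hM => hM.isFilteredBy hinf hR, .of_isFilteredBy fun _ hN => hN.1⟩
  exact ⟨key, _, key⟩
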